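/- Let n = 2^k with k ≥ 2, and let C₁ and C₂ be two distance-3 perfect codes on {-1,1}^{n−1} that are non-isomorphic, i.e., no automorphism of the (n−1)-dimensional hypercube maps C₁ onto C₂. For i = 1, 2, define f_i : {-1,1}^n → {-1,1} by f_i(y, b) = 1 if y ∈ C_i (where y ∈ {-1,1}^{n−1} and b ∈ {-1,1}), and f_i(y, b) = −1 otherwise. Then f₁ and f₂ are non-isomorphic functions on {-1,1}^n. -/
import Mathlib


/-- A point of the Boolean hypercube `{-1,1}^m`, encoded inside `Fin m → ℤ`. -/
def IsPMOne {m : ℕ} (x : Fin m → ℤ) : Prop := ∀ i, x i = 1 ∨ x i = -1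

/-- `C` is a distance-3 perfect code on `{-1,1}^m`: it consists of cube points, any two
distinct codewords are at Hamming distance at least 3, and every cube point is within
Hamming distance 1 of exactly one codeword. -/
def IsPerfectCode3 (m : ℕ) (C : Set (Fin m → ℤ)) : Prop :=
  (∀ c ∈ C, IsPMOne c) ∧
  (∀ c ∈ C, ∀ c' ∈ C, c ≠ c' → 3 ≤ hammingDist c c') ∧
  (∀ x : Fin m → ℤ, IsPMOne x → ∃! c, c ∈ C ∧ hammingDist x c ≤ 1)

/-- An automorphism of the hypercube maps `C₁` onto `C₂`. -/
def CodesIsomorphic (m : ℕ) (C₁ C₂ : Set (Fin m → ℤ)) : Prop :=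
  ∃ (π : Equiv.Perm (Fin m)) (ε : Fin m → ℤ), (∀ i, ε i = 1 ∨ ε i = -1) ∧
    (fun x : Fin m → ℤ => fun i => ε i * x (π i)) '' C₁ = C₂

/-- `f` and `g` are isomorphic functions: some automorphism of the hypercube maps one to
the other. -/
def Isomorphic (n : ℕ) (f g : (Fin n → ℤ) → ℤ) : Prop :=
  ∃ (π : Equiv.Perm (Fin n)) (ε : Fin n → ℤ), (∀ i, ε i = 1 ∨ ε i = -1) ∧
    ∀ x : Fin n → ℤ, IsPMOne x → g x = f (fun i => ε i * x (π i))

namespace Stmt19Aux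

/-- Embedding of `Fin (n-1)` into `Fin n`, with the same proof term as in the statement. -/
def emb {n : ℕ} (i : Fin (n - 1)) : Fin n := ⟨i.1, lt_of_lt_of_le i.isLt (Nat.sub_le n 1)⟩

lemma emb_val {n : ℕ} (i : Fin (n - 1)) : (emb (n := n) i).1 = i.1 := rfl

lemma sq_pm {a : ℤ} (h : a = 1 ∨ a = -1) : a * a = 1 := by
  rcases h with h | h <;> simp [h]

lemma mul_pm {a b : ℤ} (ha : a = 1 ∨ a = -1) (hb : b = 1 ∨ b = -1) :
    a * b = 1 ∨ a * b = -1 := by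
  rcases ha with h | h <;> rcases hb with h' | h' <;> simp [h, h']

lemma neg_pm {a : ℤ} (ha : a = 1 ∨ a = -1) : -a = 1 ∨ -a = -1 := by
  rcases ha with h | h <;> simp [h]

lemma hamming_update_le {m : ℕ} (c : Fin m → ℤ) (j : Fin m) (v : ℤ) :
    hammingDist c (Function.update c j v) ≤ 1 := by
  classical
  have hsub : (Finset.univ.filter fun i => c i ≠ Function.update c j v i) ⊆ {j} := by
    intro i hi
    simp only [Finset.mem_filter] at hi
    by_contra hij
    simp only [Finset.mem_singleton] at hij
    exact hi.2 (by rw [Function.update_of_ne hij])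
  calc hammingDist c (Function.update c j v)
      = (Finset.univ.filter fun i => c i ≠ Function.update c j v i).card := rfl
    _ ≤ ({j} : Finset (Fin m)).card := Finset.card_le_card hsub
    _ = 1 := rfl

end Stmt19Aux

open Stmt19Aux in
theorem stmt_19 (k n : ℕ) (hk : 2 ≤ k) (hn : n = 2 ^ k)
    (C₁ C₂ : Set (Fin (n - 1) → ℤ))
    (hC₁ : IsPerfectCode3 (n - 1) C₁) (hC₂ : IsPerfectCode3 (n - 1) C₂)
    (hnoniso : ¬ CodesIsomorphic (n - 1) C₁ C₂)
    (f₁ f₂ : (Fin n → ℤ) → ℤ)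
    -- `fᵢ(y, b) = 1` if `y ∈ Cᵢ` and `fᵢ(y, b) = -1` otherwise, where `y` consists of the
    -- first `n - 1` coordinates
    (hf₁ : ∀ x : Fin n → ℤ,
      ((fun i : Fin (n - 1) => x ⟨i.1, lt_of_lt_of_le i.isLt (Nat.sub_le n 1)⟩) ∈ C₁ →
          f₁ x = 1) ∧
      ((fun i : Fin (n - 1) => x ⟨i.1, lt_of_lt_of_le i.isLt (Nat.sub_le n 1)⟩) ∉ C₁ →
          f₁ x = -1))
    (hf₂ : ∀ x : Fin n → ℤ,
      ((fun i : Fin (n - 1) => x ⟨i.1, lt_of_lt_of_le i.isLt (Nat.sub_le n 1)⟩) ∈ C₂ →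
          f₂ x = 1) ∧
      ((fun i : Fin (n - 1) => x ⟨i.1, lt_of_lt_of_le i.isLt (Nat.sub_le n 1)⟩) ∉ C₂ →
          f₂ x = -1)) :
    ¬ Isomorphic n f₁ f₂ := by
  rintro ⟨π, ε, hε, hiso⟩
  have hn4 : 4 ≤ n := by
    subst hn
    calc 4 = 2 ^ 2 := by norm_num
    _ ≤ 2 ^ k := Nat.pow_le_pow_right (by norm_num) hk
  have hLlt : n - 1 < n := by omega
  set L : Fin n := ⟨n - 1, hLlt⟩ with hLdef
  -- restriction to the first n-1 coordinates
  set res : (Fin n → ℤ) → (Fin (n - 1) → ℤ) := fun x i => x (emb i) with hresdef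
  -- the automorphism on the n-cube
  set ψ : (Fin n → ℤ) → (Fin n → ℤ) := fun x i => ε i * x (π i) with hψdef
  -- extension of a point of the (n-1)-cube by a 1 in the last coordinate
  set ext : (Fin (n - 1) → ℤ) → (Fin n → ℤ) :=
    fun y j => if h : j.1 < n - 1 then y ⟨j.1, h⟩ else 1 with hextdef
  have hext_pm : ∀ y, IsPMOne y → IsPMOne (ext y) := by
    intro y hy j
    by_cases h : j.1 < n - 1
    · simp only [hextdef, dif_pos h]; exact hy _
    · refine Or.inl ?_
      simp only [hextdef, dif_neg h]
  have hres_ext : ∀ y, res (ext y) = y := by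
    intro y
    funext i
    have h : (emb i : Fin n).1 < n - 1 := i.isLt
    simp only [hresdef, hextdef, dif_pos h]
    exact congrArg y (Fin.ext rfl)
  -- restriction statements for hf₁ / hf₂ (definitionally `res x ∈ Cᵢ`)
  have hf₁' : ∀ x : Fin n → ℤ, (res x ∈ C₁ → f₁ x = 1) ∧ (res x ∉ C₁ → f₁ x = -1) :=
    fun x => hf₁ x
  have hf₂' : ∀ x : Fin n → ℤ, (res x ∈ C₂ → f₂ x = 1) ∧ (res x ∉ C₂ → f₂ x = -1) :=
    fun x => hf₂ x
  -- Step A: π fixes the last coordinate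
  have hπsymmL : π.symm L = L := by
    by_contra hne
    obtain ⟨c, ⟨hcC, -⟩, -⟩ := hC₁.2.2 (fun _ => 1) (fun _ => by left; rfl)
    have hi0 : (π.symm L).1 < n - 1 := by
      have h1 : (π.symm L).1 < n := (π.symm L).isLt
      have h2 : (π.symm L).1 ≠ n - 1 := fun h => hne (Fin.ext h)
      omega
    set j0 : Fin (n - 1) := ⟨(π.symm L).1, hi0⟩ with hj0def
    set c' : Fin (n - 1) → ℤ := Function.update c j0 (-(c j0)) with hc'def
    have hc'ne : c ≠ c' := by
      intro h
      have h2 := congrFun h j0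
      rw [hc'def, Function.update_self] at h2
      rcases hC₁.1 c hcC j0 with h1 | h1 <;> rw [h1] at h2 <;> omega
    have hc'notin : c' ∉ C₁ := by
      intro hc'C
      have h3 := hC₁.2.1 c hcC c' hc'C hc'ne
      have h1 := hamming_update_le c j0 (-(c j0))
      rw [← hc'def] at h1
      omega
    set z : Fin n → ℤ := ext c with hzdef
    have hz_pm : IsPMOne z := hext_pm c (hC₁.1 c hcC)
    set xp : Fin n → ℤ := fun j => ε (π.symm j) * z (π.symm j) with hxpdef
    have hxp_pm : IsPMOne xp := fun j => mul_pm (hε _) (hz_pm _)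
    set xm : Fin n → ℤ := Function.update xp L (-(xp L)) with hxmdef
    have hxm_pm : IsPMOne xm := by
      intro j
      by_cases h : j = L
      · subst h; rw [hxmdef, Function.update_self]; exact neg_pm (hxp_pm _)
      · rw [hxmdef, Function.update_of_ne h]; exact hxp_pm _
    have hψxp : ∀ i, ψ xp i = z i := by
      intro i
      simp only [hψdef, hxpdef, Equiv.symm_apply_apply]
      rw [← mul_assoc, sq_pm (hε i), one_mul]
    -- res (ψ xp) = c
    have hres_ψxp : res (ψ xp) = c := by
      funext i
      show ψ xp (emb i) = c i
      rw [hψxp]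
      have h : (emb i : Fin n).1 < n - 1 := i.isLt
      simp only [hzdef, hextdef, dif_pos h]
      exact congrArg c (Fin.ext rfl)
    -- res (ψ xm) = c'
    have hembj0 : (emb j0 : Fin n) = π.symm L := Fin.ext rfl
    have hres_ψxm : res (ψ xm) = c' := by
      funext i
      show ψ xm (emb i) = c' i
      by_cases h : i = j0
      · subst h
        have hπemb : π (emb j0) = L := by rw [hembj0, Equiv.apply_symm_apply]
        show ε (emb j0) * xm (π (emb j0)) = c' j0
        rw [hπemb, hxmdef, Function.update_self, hc'def, Function.update_self,
          mul_neg]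
        have : ε (emb j0) * xp L = c j0 := by
          have := hψxp (emb j0)
          simp only [hψdef] at this
          rw [hπemb] at this
          rw [this]
          have hlt : (emb j0 : Fin n).1 < n - 1 := j0.isLt
          simp only [hzdef, hextdef, dif_pos hlt]
          exact congrArg c (Fin.ext rfl)
        rw [this]
      · have hπne : π (emb i) ≠ L := by
          intro heq
          apply h
          have h2 : (emb i : Fin n) = π.symm L := by rw [← heq, Equiv.symm_apply_apply]
          have h3 := congrArg Fin.val h2
          exact Fin.ext h3
        show ε (emb i) * xm (π (emb i)) = c' i
        rw [hxmdef, Function.update_of_ne hπne, hc'def, Function.update_of_ne h]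
        have := hψxp (emb i)
        simp only [hψdef] at this
        rw [this]
        have hlt : (emb i : Fin n).1 < n - 1 := i.isLt
        simp only [hzdef, hextdef, dif_pos hlt]
        exact congrArg c (Fin.ext rfl)
    -- f₂ xp = f₂ xm since they agree on the first n-1 coordinates
    have hres_eq : res xp = res xm := by
      funext i
      show xp (emb i) = xm (emb i)
      have hne : (emb i : Fin n) ≠ L := by
        intro heq
        have := congrArg Fin.val heq
        have hlt : (emb i : Fin n).1 < n - 1 := i.isLt
        simp only [hLdef] at this
        omega
      rw [hxmdef, Function.update_of_ne hne]
    have h1 : f₂ xp = 1 := by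
      rw [hiso xp hxp_pm]
      exact (hf₁' (ψ xp)).1 (by rw [hres_ψxp]; exact hcC)
    have h2 : f₂ xm = -1 := by
      rw [hiso xm hxm_pm]
      exact (hf₁' (ψ xm)).2 (by rw [hres_ψxm]; exact hc'notin)
    have h3 : f₂ xp = f₂ xm := by
      by_cases h : res xp ∈ C₂
      · rw [(hf₂' xp).1 h, (hf₂' xm).1 (hres_eq ▸ h)]
      · rw [(hf₂' xp).2 h, (hf₂' xm).2 (hres_eq ▸ h)]
    rw [h1, h2] at h3
    omega
  have hπL : π L = L := by
    have h := π.apply_symm_apply L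
    rw [hπsymmL] at h
    exact h
  -- restricted index bounds
  have hres1 : ∀ i : Fin (n - 1), (π (emb i)).1 < n - 1 := by
    intro i
    have hne : π (emb i) ≠ L := by
      intro heq
      have h2 : (emb i : Fin n) = L := by
        rw [← hπsymmL, ← heq, Equiv.symm_apply_apply]
      have h3 := congrArg Fin.val h2
      have hlt : (emb i : Fin n).1 < n - 1 := i.isLt
      simp only [hLdef] at h3
      omega
    have h2 : (π (emb i)).1 ≠ n - 1 := fun h => hne (Fin.ext h)
    have h3 : (π (emb i)).1 < n := (π (emb i)).isLt
    omega
  have hres2 : ∀ i : Fin (n - 1), (π.symm (emb i)).1 < n - 1 := by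
    intro i
    have hne : π.symm (emb i) ≠ L := by
      intro heq
      have h2 : (emb i : Fin n) = L := by rw [← hπL, ← heq, Equiv.apply_symm_apply]
      have h3 := congrArg Fin.val h2
      have hlt : (emb i : Fin n).1 < n - 1 := i.isLt
      simp only [hLdef] at h3
      omega
    have h2 : (π.symm (emb i)).1 ≠ n - 1 := fun h => hne (Fin.ext h)
    have h3 : (π.symm (emb i)).1 < n := (π.symm (emb i)).isLt
    omega
  -- the restricted permutation (for the code isomorphism, we use π.symm)
  set σ : Equiv.Perm (Fin (n - 1)) :=
    { toFun := fun i => ⟨(π.symm (emb i)).1, hres2 i⟩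
      invFun := fun i => ⟨(π (emb i)).1, hres1 i⟩
      left_inv := by
        intro i
        apply Fin.ext
        show (π (emb (⟨(π.symm (emb i)).1, hres2 i⟩ : Fin (n - 1)))).1 = i.1
        have he : (emb (⟨(π.symm (emb i)).1, hres2 i⟩ : Fin (n - 1)) : Fin n)
            = π.symm (emb i) := Fin.ext rfl
        rw [he, Equiv.apply_symm_apply]
        rfl
      right_inv := by
        intro i
        apply Fin.ext
        show (π.symm (emb (⟨(π (emb i)).1, hres1 i⟩ : Fin (n - 1)))).1 = i.1
        have he : (emb (⟨(π (emb i)).1, hres1 i⟩ : Fin (n - 1)) : Fin n)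
            = π (emb i) := Fin.ext rfl
        rw [he, Equiv.symm_apply_apply]
        rfl } with hσdef
  set ε'' : Fin (n - 1) → ℤ := fun j => ε (π.symm (emb j)) with hε''def
  -- the forward map Φ on the (n-1)-cube
  set Φ : (Fin (n - 1) → ℤ) → (Fin (n - 1) → ℤ) :=
    fun y i => ε (emb i) * y ⟨(π (emb i)).1, hres1 i⟩ with hΦdef
  -- key equivalence: for cube points y, y ∈ C₂ ↔ Φ y ∈ C₁
  have key : ∀ y : Fin (n - 1) → ℤ, IsPMOne y → (y ∈ C₂ ↔ Φ y ∈ C₁) := by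
    intro y hy
    set x : Fin n → ℤ := ext y with hxdef
    have hx_pm : IsPMOne x := hext_pm y hy
    have hiso' := hiso x hx_pm
    have hresx : res x = y := hres_ext y
    have hresψ : res (ψ x) = Φ y := by
      funext i
      show ε (emb i) * x (π (emb i)) = Φ y i
      simp only [hΦdef]
      congr 1
      have h : (π (emb i)).1 < n - 1 := hres1 i
      simp only [hxdef, hextdef, dif_pos h]
    constructor
    · intro hyC
      by_contra hnot
      have h1 : f₂ x = 1 := (hf₂' x).1 (by rw [hresx]; exact hyC)
      have h3 : f₁ (ψ x) = -1 := (hf₁' (ψ x)).2 (by rw [hresψ]; exact hnot)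
      rw [h1, h3] at hiso'
      omega
    · intro hΦC
      by_contra hnot
      have h1 : f₂ x = -1 := (hf₂' x).2 (by rw [hresx]; exact hnot)
      have h3 : f₁ (ψ x) = 1 := (hf₁' (ψ x)).1 (by rw [hresψ]; exact hΦC)
      rw [h1, h3] at hiso'
      omega
  -- Φ is ±1-preserving
  have hΦ_pm : ∀ y, IsPMOne y → IsPMOne (Φ y) := by
    intro y hy i
    exact mul_pm (hε _) (hy _)
  -- the inverse map φ' (given by σ, ε'') is a two-sided inverse of Φ on all functions
  have hinv1 : ∀ z : Fin (n - 1) → ℤ, Φ (fun i => ε'' i * z (σ i)) = z := by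
    intro z
    funext i
    simp only [hΦdef, hε''def, hσdef, Equiv.coe_fn_mk]
    have he1 : (emb (⟨(π (emb i)).1, hres1 i⟩ : Fin (n - 1)) : Fin n) = π (emb i) :=
      Fin.ext rfl
    have he2 : π.symm (emb (⟨(π (emb i)).1, hres1 i⟩ : Fin (n - 1))) = emb i := by
      rw [he1, Equiv.symm_apply_apply]
    simp only [he2, emb_val, Fin.eta]
    rw [← mul_assoc, sq_pm (hε _), one_mul]
  have hinv2 : ∀ y : Fin (n - 1) → ℤ, (fun j => ε'' j * (Φ y) (σ j)) = y := by
    intro y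
    funext j
    simp only [hΦdef, hε''def, hσdef, Equiv.coe_fn_mk]
    have he1 : (emb (⟨(π.symm (emb j)).1, hres2 j⟩ : Fin (n - 1)) : Fin n)
        = π.symm (emb j) := Fin.ext rfl
    simp only [he1, Equiv.apply_symm_apply, emb_val, Fin.eta]
    rw [← mul_assoc, sq_pm (hε _), one_mul]
  -- conclude: codes are isomorphic, contradiction
  apply hnoniso
  refine ⟨σ, ε'', fun j => hε _, ?_⟩
  ext y
  constructor
  · rintro ⟨z, hzC, rfl⟩
    show (fun i => ε'' i * z (σ i)) ∈ C₂
    have hz_pm := hC₁.1 z hzC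
    have hcube : IsPMOne (fun i => ε'' i * z (σ i)) := fun i => mul_pm (hε _) (hz_pm _)
    rw [key _ hcube, hinv1 z]
    exact hzC
  · intro hyC
    have hy_pm := hC₂.1 y hyC
    exact ⟨Φ y, (key y hy_pm).1 hyC, hinv2 y⟩
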